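/- arXiv:2412.06844 — 5 statements merged into one kernel-verified Lean document; each statement's English description precedes it below -/
import Mathlib

section
/- Let p and q be monic real polynomials of degrees n and n+1 with strictly interlacing simple real zeros on an interval (c,d) (every zero of p lies strictly between consecutive zeros of q and vice versa as in z_1 < x_1 < z_2 < ... < x_n < z_{n+1}). Suppose g is a real polynomial of degree n satisfying f(x)·g(x) = D(x)·p(x) + H(x)·q(x) for all x, where f and D are nonvanishing on (c,d). If g and q have no common zeros, then all zeros of g are real and simple, and between any two consecutive zeros of q there lies exactly one zero of g. -/
open Polynomial

lemma const_sign_aux {c d : ℝ} {f : ℝ → ℝ} (hfc : Continuous f)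
    (hf : ∀ t ∈ Set.Ioo c d, f t ≠ 0) {a b : ℝ}
    (ha : a ∈ Set.Ioo c d) (hb : b ∈ Set.Ioo c d) : 0 < f a * f b := by
  rcases lt_trichotomy (f a * f b) 0 with h | h | h
  · exfalso
    have hsub : Set.uIcc a b ⊆ Set.Ioo c d :=
      Set.OrdConnected.uIcc_subset Set.ordConnected_Ioo ha hb
    have h0 : (0:ℝ) ∈ Set.uIcc (f a) (f b) := by
      rcases mul_neg_iff.mp h with ⟨h1, h2⟩ | ⟨h1, h2⟩
      · exact Set.mem_uIcc.mpr (Or.inr ⟨h2.le, h1.le⟩)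
      · exact Set.mem_uIcc.mpr (Or.inl ⟨h1.le, h2.le⟩)
    obtain ⟨t, ht, hft⟩ := intermediate_value_uIcc (hfc.continuousOn) h0
    exact hf t (hsub ht) hft
  · exfalso
    rcases mul_eq_zero.mp h with h | h
    · exact hf a ha h
    · exact hf b hb h
  · exact h

theorem stmt1 (n : ℕ) (c d : ℝ) (p q g D H : Polynomial ℝ) (f : ℝ → ℝ)
    (x : Fin n → ℝ) (z : Fin (n + 1) → ℝ)
    (hx : StrictMono x) (hz : StrictMono z)
    (hp : p = ∏ i, (X - C (x i)))
    (hq : q = ∏ i, (X - C (z i)))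
    (hxcd : ∀ i, x i ∈ Set.Ioo c d) (hzcd : ∀ i, z i ∈ Set.Ioo c d)
    (hint : ∀ i : Fin n, z i.castSucc < x i ∧ x i < z i.succ)
    (hfc : Continuous f) (hf : ∀ t ∈ Set.Ioo c d, f t ≠ 0)
    (hD : ∀ t ∈ Set.Ioo c d, D.eval t ≠ 0)
    (hg : g.natDegree = n)
    (hcop : ∀ t : ℝ, ¬(g.eval t = 0 ∧ q.eval t = 0))
    (hid : ∀ t : ℝ, f t * g.eval t = D.eval t * p.eval t + H.eval t * q.eval t) :
    ∃ y : Fin n → ℝ, StrictMono y ∧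
      g = C g.leadingCoeff * ∏ i, (X - C (y i)) ∧
      ∀ i : Fin n, z i.castSucc < y i ∧ y i < z i.succ := by
  -- q vanishes at each z k
  have hqz : ∀ k : Fin (n+1), q.eval (z k) = 0 := by
    intro k
    rw [hq, eval_prod]
    exact Finset.prod_eq_zero (Finset.mem_univ k) (by simp)
  have hgz : ∀ k : Fin (n+1), g.eval (z k) ≠ 0 := by
    intro k h
    exact hcop (z k) ⟨h, hqz k⟩
  -- p alternates at consecutive z's
  have hpprod : ∀ i : Fin n,
      p.eval (z i.castSucc) * p.eval (z i.succ) < 0 := by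
    intro i
    rw [hp, eval_prod, eval_prod]
    simp only [eval_sub, eval_X, eval_C]
    rw [← Finset.prod_mul_distrib]
    rw [← Finset.mul_prod_erase _ _ (Finset.mem_univ i)]
    have hi : (z i.castSucc - x i) * (z i.succ - x i) < 0 := by
      have h1 := (hint i).1
      have h2 := (hint i).2
      nlinarith
    have hrest : 0 < ∏ j ∈ Finset.univ.erase i,
        (z i.castSucc - x j) * (z i.succ - x j) := by
      apply Finset.prod_pos
      intro j hj
      have hji : j ≠ i := Finset.ne_of_mem_erase hj
      rcases lt_or_gt_of_ne hji with hlt | hgt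
      · -- j < i : x j < z i.castSucc
        have h1 : x j < z j.succ := (hint j).2
        have h2 : z j.succ ≤ z i.castSucc := by
          apply hz.monotone
          simp only [Fin.le_def, Fin.val_succ, Fin.coe_castSucc]
          omega
        have h3 : z i.castSucc < z i.succ := hz Fin.castSucc_lt_succ
        nlinarith
      · -- i < j : z i.succ < x j
        have h1 : z j.castSucc < x j := (hint j).1
        have h2 : z i.succ ≤ z j.castSucc := by
          apply hz.monotone
          simp only [Fin.le_def, Fin.val_succ, Fin.coe_castSucc]
          omega
        have h3 : z i.castSucc < z i.succ := hz Fin.castSucc_lt_succ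
        nlinarith
    nlinarith
  -- g alternates at consecutive z's
  have hsign : ∀ i : Fin n,
      g.eval (z i.castSucc) * g.eval (z i.succ) < 0 := by
    intro i
    set a := z i.castSucc with ha'
    set b := z i.succ with hb'
    have ha : a ∈ Set.Ioo c d := hzcd _
    have hb : b ∈ Set.Ioo c d := hzcd _
    have e1 : f a * g.eval a = D.eval a * p.eval a := by
      have := hid a
      rw [hqz i.castSucc] at this
      simpa using this
    have e2 : f b * g.eval b = D.eval b * p.eval b := by
      have := hid b
      rw [hqz i.succ] at this
      simpa using this
    have hfab : 0 < f a * f b := const_sign_aux hfc hf ha hb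
    have hDab : 0 < D.eval a * D.eval b :=
      const_sign_aux (Polynomial.continuous D)
        (by intro t ht; exact hD t ht) ha hb
    have hpab : p.eval a * p.eval b < 0 := hpprod i
    have key : (f a * f b) * (g.eval a * g.eval b) =
        (D.eval a * D.eval b) * (p.eval a * p.eval b) := by
      linear_combination (f b * g.eval b) * e1 + (D.eval a * p.eval a) * e2
    by_contra hcon
    push_neg at hcon
    have h4 : 0 ≤ (f a * f b) * (g.eval a * g.eval b) := mul_nonneg hfab.le hcon
    have h5 : (D.eval a * D.eval b) * (p.eval a * p.eval b) < 0 :=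
      mul_neg_of_pos_of_neg hDab hpab
    rw [key] at h4
    linarith
  -- IVT: a root of g in each interval
  have hEx : ∀ i : Fin n, ∃ t : ℝ,
      t ∈ Set.Ioo (z i.castSucc) (z i.succ) ∧ g.eval t = 0 := by
    intro i
    have hab : z i.castSucc < z i.succ := hz Fin.castSucc_lt_succ
    have hcont : ContinuousOn (fun t => g.eval t) (Set.Icc (z i.castSucc) (z i.succ)) :=
      (Polynomial.continuous g).continuousOn
    rcases mul_neg_iff.mp (hsign i) with ⟨h1, h2⟩ | ⟨h1, h2⟩
    · obtain ⟨t, ht, hgt⟩ := intermediate_value_Ioo' hab.le hcont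
        (Set.mem_Ioo.mpr ⟨h2, h1⟩)
      exact ⟨t, ht, hgt⟩
    · obtain ⟨t, ht, hgt⟩ := intermediate_value_Ioo hab.le hcont
        (Set.mem_Ioo.mpr ⟨h1, h2⟩)
      exact ⟨t, ht, hgt⟩
  choose y hy1 hy2 using hEx
  have hymono : StrictMono y := by
    intro i j hij
    have h1 : y i < z i.succ := (hy1 i).2
    have h2 : z j.castSucc < y j := (hy1 j).1
    have h3 : z i.succ ≤ z j.castSucc := by
      apply hz.monotone
      simp only [Fin.le_def, Fin.val_succ, Fin.coe_castSucc]
      exact hij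
    linarith
  have hg0 : g ≠ 0 := by
    intro h
    exact hgz 0 (by simp [h])
  -- factorization
  set P : Polynomial ℝ := ∏ i, (X - C (y i)) with hPdef
  have hPmonic : P.Monic := monic_prod_of_monic _ _ (fun i _ => monic_X_sub_C _)
  have hPdeg : P.natDegree = n := by
    rw [hPdef, natDegree_prod _ _ (fun i _ => X_sub_C_ne_zero (y i))]
    simp
  have hMnodup : (Finset.univ.val.map y).Nodup :=
    Finset.univ.nodup.map hymono.injective
  have hMle : (Finset.univ.val.map y) ≤ g.roots := by
    rw [Multiset.le_iff_subset hMnodup]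
    intro r hr
    obtain ⟨i, _, rfl⟩ := Multiset.mem_map.mp hr
    exact (mem_roots hg0).mpr (hy2 i)
  have hPdvd : P ∣ g := by
    have h1 : ((Finset.univ.val.map y).map (fun r => X - C r)).prod ∣
        (g.roots.map (fun r => X - C r)).prod :=
      Multiset.prod_dvd_prod_of_le (Multiset.map_le_map hMle)
    have h2 := prod_multiset_X_sub_C_dvd g
    have h3 : P = ((Finset.univ.val.map y).map (fun r => X - C r)).prod := by
      rw [hPdef, Finset.prod_eq_multiset_prod, Multiset.map_map]
      rfl
    rw [h3]
    exact h1.trans h2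
  obtain ⟨u, hu⟩ := hPdvd
  have hu0 : u ≠ 0 := by
    intro h
    rw [h, mul_zero] at hu
    exact hg0 hu
  have hudeg : u.natDegree = 0 := by
    have := natDegree_mul hPmonic.ne_zero hu0
    rw [← hu, hg, hPdeg] at this
    omega
  obtain ⟨a, ha⟩ := natDegree_eq_zero.mp hudeg
  have hlc : g.leadingCoeff = a := by
    rw [hu, leadingCoeff_mul, hPmonic.leadingCoeff, one_mul, ← ha, leadingCoeff_C]
  refine ⟨y, hymono, ?_, fun i => ⟨(hy1 i).1, (hy1 i).2⟩⟩
  rw [hlc, hu, ← ha, mul_comm]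
end

section
/- Let p and q be monic real polynomials of degrees n and n+1 with strictly interlacing simple real zeros z_1 < x_1 < z_2 < ... < x_n < z_{n+1} on an interval (c,d), and let g be a monic real polynomial of degree n with all real zeros satisfying f(x)·g(x) = D(x)·p(x) + (x−A)·q(x) for all x, where f(x) > 0 on (c,d), D is a polynomial, and A ∈ ℝ. If g and p have no common zero, then the n+1 numbers consisting of A together with the n zeros of g are pairwise distinct and interlace with the n zeros of p: between any two consecutive zeros of p lies exactly one element of {A, zeros of g}, exactly one element lies below x_1, and exactly one lies above x_n. -/
open Polynomial

lemma ivt_zero' {f : ℝ → ℝ} (hf : Continuous f) {a b : ℝ} (hab : a < b)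
    (hsign : f a * f b < 0) : ∃ t ∈ Set.Ioo a b, f t = 0 := by
  rcases mul_neg_iff.mp hsign with ⟨ha, hb⟩ | ⟨ha, hb⟩
  · obtain ⟨t, ht, ht0⟩ := intermediate_value_Ioo' hab.le hf.continuousOn
      (Set.mem_Ioo.mpr ⟨hb, ha⟩)
    exact ⟨t, ht, ht0⟩
  · obtain ⟨t, ht, ht0⟩ := intermediate_value_Ioo hab.le hf.continuousOn
      (Set.mem_Ioo.mpr ⟨ha, hb⟩)
    exact ⟨t, ht, ht0⟩

lemma prod_neg'' {m : ℕ} (s : Finset (Fin m)) (v : Fin m → ℝ) :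
    ∏ i ∈ s, (-(v i)) = (-1 : ℝ) ^ s.card * ∏ i ∈ s, v i := by
  rw [← Finset.prod_const, ← Finset.prod_mul_distrib]
  exact Finset.prod_congr rfl fun i _ => by ring

theorem stmt2 (n : ℕ) (p q g D : Polynomial ℝ) (f : ℝ → ℝ) (c d A : ℝ)
    (x : Fin n → ℝ) (z : Fin (n + 1) → ℝ) (y : Fin n → ℝ)
    (hx : StrictMono x) (hz : StrictMono z) (hy : Monotone y)
    (hp : p = ∏ i, (X - C (x i)))
    (hq : q = ∏ i, (X - C (z i)))
    (hg : g = ∏ i, (X - C (y i)))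
    (hxcd : ∀ i, x i ∈ Set.Ioo c d) (hzcd : ∀ i, z i ∈ Set.Ioo c d)
    (hycd : ∀ i, y i ∈ Set.Ioo c d) (hAcd : A ∈ Set.Ioo c d)
    (hint : ∀ i : Fin n, z i.castSucc < x i ∧ x i < z i.succ)
    (hf : ∀ t ∈ Set.Ioo c d, 0 < f t)
    (hid : ∀ t : ℝ, f t * g.eval t = D.eval t * p.eval t + (t - A) * q.eval t)
    (hpA : p.eval A ≠ 0) (hgA : g.eval A ≠ 0) :
    ∃ w : Fin (n + 1) → ℝ, StrictMono w ∧
      (X - C A) * g = ∏ i, (X - C (w i)) ∧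
      ∀ i : Fin n, w i.castSucc < x i ∧ x i < w i.succ := by
  obtain ⟨hcA, hAd⟩ := hAcd
  have hcd : c < d := hcA.trans hAd
  set h : Polynomial ℝ := (X - C A) * g with hh
  have hevalh : ∀ t : ℝ, h.eval t = (t - A) * ∏ i, (t - y i) := by
    intro t; simp [hh, hg, eval_prod]
  have hevalp : ∀ t : ℝ, p.eval t = ∏ i, (t - x i) := by
    intro t; simp [hp, eval_prod]
  have hevalq : ∀ t : ℝ, q.eval t = ∏ i, (t - z i) := by
    intro t; simp [hq, eval_prod]
  -- sign at d
  have H3 : 0 < h.eval d := by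
    rw [hevalh]
    exact mul_pos (by linarith)
      (Finset.prod_pos fun i _ => by have := (hycd i).2; linarith)
  -- sign at c
  have H2 : 0 < (-1 : ℝ) ^ (n + 1) * h.eval c := by
    rw [hevalh]
    have e1 : ∏ i, (c - y i) = (-1 : ℝ) ^ n * ∏ i, (y i - c) := by
      rw [show (∏ i, (c - y i)) = ∏ i, (-(y i - c)) from
        Finset.prod_congr rfl fun i _ => by ring, prod_neg'']
      simp
    have hP : 0 < ∏ i, (y i - c) :=
      Finset.prod_pos fun i _ => by have := (hycd i).1; linarith
    have : (-1 : ℝ) ^ (n + 1) * ((c - A) * ((-1 : ℝ) ^ n * ∏ i, (y i - c)))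
        = (-1 : ℝ) ^ (n + 1 + n) * ((c - A) * ∏ i, (y i - c)) := by
      rw [pow_add]; ring
    rw [e1, this, Odd.neg_one_pow ⟨n, by ring⟩]
    nlinarith
  -- sign of q at x j
  have hqsign : ∀ j : Fin n, 0 < (-1 : ℝ) ^ (n - j.val) * q.eval (x j) := by
    intro j
    rw [hevalq]
    have hsplit : (∏ k, (x j - z k)) =
        (∏ k ∈ Finset.Iic j.castSucc, (x j - z k)) *
        ∏ k ∈ Finset.Ioi j.castSucc, (x j - z k) := by
      rw [← Finset.prod_mul_prod_compl (Finset.Iic j.castSucc)]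
      congr 1
      refine Finset.prod_congr ?_ fun _ _ => rfl
      ext k; simp
    have hpos1 : 0 < ∏ k ∈ Finset.Iic j.castSucc, (x j - z k) := by
      refine Finset.prod_pos fun k hk => ?_
      have h1 : z k ≤ z j.castSucc := hz.monotone (Finset.mem_Iic.mp hk)
      have := (hint j).1; linarith
    have hcard : (Finset.Ioi (j.castSucc) : Finset (Fin (n + 1))).card = n - j.val := by
      rw [Fin.card_Ioi]; simp
    have hneg : (∏ k ∈ Finset.Ioi j.castSucc, (x j - z k)) =
        (-1 : ℝ) ^ (n - j.val) * ∏ k ∈ Finset.Ioi j.castSucc, (z k - x j) := by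
      rw [show (∏ k ∈ Finset.Ioi j.castSucc, (x j - z k)) =
        ∏ k ∈ Finset.Ioi j.castSucc, (-(z k - x j)) from
        Finset.prod_congr rfl fun _ _ => by ring, prod_neg'', hcard]
    have hpos2 : 0 < ∏ k ∈ Finset.Ioi j.castSucc, (z k - x j) := by
      refine Finset.prod_pos fun k hk => ?_
      have hk' : j.succ ≤ k := by
        have hk2 := Finset.mem_Ioi.mp hk
        rw [Fin.lt_def] at hk2
        rw [Fin.le_def]
        simp only [Fin.val_succ, Fin.coe_castSucc] at *
        omega
      have h1 : z j.succ ≤ z k := hz.monotone hk'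
      have := (hint j).2; linarith
    have hsq : ((-1 : ℝ) ^ (n - j.val)) * ((-1 : ℝ) ^ (n - j.val)) = 1 := by
      rw [← pow_add]
      exact Even.neg_one_pow ⟨n - j.val, rfl⟩
    rw [hsplit, hneg]
    have hrw : (-1 : ℝ) ^ (n - j.val) *
        ((∏ k ∈ Finset.Iic j.castSucc, (x j - z k)) *
          ((-1 : ℝ) ^ (n - j.val) * ∏ k ∈ Finset.Ioi j.castSucc, (z k - x j)))
        = ((-1 : ℝ) ^ (n - j.val) * (-1 : ℝ) ^ (n - j.val)) *
          ((∏ k ∈ Finset.Iic j.castSucc, (x j - z k)) *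
            ∏ k ∈ Finset.Ioi j.castSucc, (z k - x j)) := by ring
    rw [hrw, hsq, one_mul]
    exact mul_pos hpos1 hpos2
  -- sign of h at x j
  have H1 : ∀ j : Fin n, 0 < (-1 : ℝ) ^ (n - j.val) * h.eval (x j) := by
    intro j
    have hpx : p.eval (x j) = 0 := by
      rw [hevalp]
      exact Finset.prod_eq_zero (Finset.mem_univ j) (by ring)
    have hfj : 0 < f (x j) := hf _ (hxcd j)
    have heq : f (x j) * g.eval (x j) = (x j - A) * q.eval (x j) := by
      have := hid (x j); rw [hpx] at this; linarith
    have hxA : x j ≠ A := by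
      intro hxe
      apply hgA
      have h0 : f (x j) * g.eval (x j) = 0 := by rw [heq, hxe]; ring
      have := (mul_eq_zero.mp h0).resolve_left (ne_of_gt hfj)
      rwa [hxe] at this
    have hh' : h.eval (x j) = (x j - A) * g.eval (x j) := by simp [hh]
    have hkey : f (x j) * ((-1 : ℝ) ^ (n - j.val) * h.eval (x j))
        = (x j - A) ^ 2 * ((-1 : ℝ) ^ (n - j.val) * q.eval (x j)) := by
      rw [hh']
      linear_combination (x j - A) * ((-1 : ℝ) ^ (n - j.val)) * heq
    have hrhs : 0 < (x j - A) ^ 2 * ((-1 : ℝ) ^ (n - j.val) * q.eval (x j)) :=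
      mul_pos (pow_two_pos_of_ne_zero (sub_ne_zero.mpr hxA)) (hqsign j)
    by_contra hle
    push_neg at hle
    nlinarith [mul_nonneg hfj.le (neg_nonneg.2 hle)]
  -- endpoints
  set lo : Fin (n + 1) → ℝ := Fin.cases c x with hlo
  set hi : Fin (n + 1) → ℝ := Fin.lastCases d x with hhi
  have hlo0 : lo 0 = c := rfl
  have hlos : ∀ j : Fin n, lo j.succ = x j := fun j => by simp [hlo]
  have hhil : hi (Fin.last n) = d := by simp [hhi]
  have hhic : ∀ j : Fin n, hi j.castSucc = x j := fun j => by simp [hhi]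
  have hlod : ∀ i, lo i < d := by
    intro i
    induction i using Fin.cases with
    | zero => exact hcd
    | succ j => rw [hlos]; exact (hxcd j).2
  have hlohi : ∀ i, lo i < hi i := by
    intro i
    induction i using Fin.lastCases with
    | last => rw [hhil]; exact hlod _
    | cast j =>
      rw [hhic]
      rcases Fin.eq_zero_or_eq_succ j.castSucc with h0 | ⟨k, hk⟩
      · rw [h0, hlo0]; exact (hxcd j).1
      · rw [hk, hlos]
        apply hx
        have hv : (j.castSucc : Fin (n + 1)).val = k.succ.val := by rw [hk]
        simp only [Fin.coe_castSucc, Fin.val_succ] at hv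
        rw [Fin.lt_def]; omega
  have Hlo : ∀ i : Fin (n + 1), 0 < (-1 : ℝ) ^ (n + 1 - i.val) * h.eval (lo i) := by
    intro i
    induction i using Fin.cases with
    | zero => rw [hlo0]; simpa using H2
    | succ j =>
      rw [hlos]
      have he : n + 1 - (j.succ).val = n - j.val := by
        simp only [Fin.val_succ]; omega
      rw [he]; exact H1 j
  have Hhi : ∀ i : Fin (n + 1), 0 < (-1 : ℝ) ^ (n - i.val) * h.eval (hi i) := by
    intro i
    induction i using Fin.lastCases with
    | last => rw [hhil]; simpa using H3
    | cast j => rw [hhic]; simpa using H1 j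
  have key : ∀ i : Fin (n + 1), ∃ t ∈ Set.Ioo (lo i) (hi i), h.eval t = 0 := by
    intro i
    refine ivt_zero' (f := fun t => h.eval t) h.continuous (hlohi i) ?_
    have h1 := Hlo i
    have h2 := Hhi i
    have hmul := mul_pos h1 h2
    have hiv : i.val ≤ n := Nat.lt_succ_iff.mp i.isLt
    have hrw : (-1 : ℝ) ^ (n + 1 - i.val) * h.eval (lo i) *
        ((-1 : ℝ) ^ (n - i.val) * h.eval (hi i))
        = (-1 : ℝ) ^ ((n + 1 - i.val) + (n - i.val)) *
          (h.eval (lo i) * h.eval (hi i)) := by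
      rw [pow_add]; ring
    have hodd : Odd ((n + 1 - i.val) + (n - i.val)) := ⟨n - i.val, by omega⟩
    rw [hrw, hodd.neg_one_pow] at hmul
    simpa using (by linarith : h.eval (lo i) * h.eval (hi i) < 0)
  choose w hw hw0 using key
  have hinter : ∀ i : Fin n, w i.castSucc < x i ∧ x i < w i.succ := by
    intro i
    constructor
    · have := (hw i.castSucc).2; rwa [hhic] at this
    · have := (hw i.succ).1; rwa [hlos] at this
  have hwmono : StrictMono w := by
    rw [Fin.strictMono_iff_lt_succ]
    intro i
    exact (hinter i).1.trans (hinter i).2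
  refine ⟨w, hwmono, ?_, hinter⟩
  -- product identity via multisets
  have hroot : ∀ i, w i = A ∨ ∃ j, w i = y j := by
    intro i
    have h0 := hw0 i
    rw [hevalh] at h0
    rcases mul_eq_zero.mp h0 with h1 | h2
    · left; have := sub_eq_zero.mp h1; linarith
    · right
      obtain ⟨j, _, hj⟩ := Finset.prod_eq_zero_iff.mp h2
      exact ⟨j, by have := sub_eq_zero.mp hj; linarith⟩
  set M : Multiset ℝ := A ::ₘ Multiset.map y Finset.univ.val with hM
  set W : Multiset ℝ := Multiset.map w Finset.univ.val with hW
  have hWnodup : W.Nodup := Finset.univ.nodup.map hwmono.injective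
  have hmemM : ∀ r ∈ W, r ∈ M := by
    intro r hr
    obtain ⟨i, _, rfl⟩ := Multiset.mem_map.mp hr
    rcases hroot i with h1 | ⟨j, hj⟩
    · rw [h1, hM]; exact Multiset.mem_cons_self _ _
    · rw [hj, hM]
      exact Multiset.mem_cons_of_mem (Multiset.mem_map.mpr ⟨j, by simp, rfl⟩)
  have hle : W ≤ M := by
    rw [Multiset.le_iff_count]
    intro a
    by_cases ha : a ∈ W
    · rw [Multiset.count_eq_one_of_mem hWnodup ha]
      exact Multiset.one_le_count_iff_mem.mpr (hmemM a ha)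
    · rw [Multiset.count_eq_zero_of_notMem ha]
      exact Nat.zero_le _
  have hcards : M.card ≤ W.card := by
    rw [hM, hW]; simp
  have hWM : W = M := Multiset.eq_of_le_of_card_le hle hcards
  have lhs : (X - C A) * g = (M.map fun r => X - C r).prod := by
    rw [hg, hM, Multiset.map_cons, Multiset.prod_cons]
    congr 1
    rw [Multiset.map_map, Finset.prod]
    rfl
  have rhs : (∏ i, (X - C (w i))) = (W.map fun r => X - C r).prod := by
    rw [hW, Multiset.map_map, Finset.prod]
    rfl
  rw [hh, lhs, ← hWM, ← rhs]
end

section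
/- Under the hypotheses of the main interlacing theorem (f·g_n = D·p_n + (x−A)·q_{n+1}, f > 0 on (c,d), zeros of p_n and q_{n+1} interlacing, g_n monic of degree n with real zeros, g_n and p_n coprime), if A < x_{1,n} (A is less than the smallest zero of p_n), then the zeros y_1 < ... < y_n of g_n satisfy A < x_1 < y_1 < x_2 < y_2 < ... < y_{n-1} < x_n < y_n, where x_1 < ... < x_n are the zeros of p_n. -/
/-!
At a zero `x i` of `p` the identity reads `f (x i) * g (x i) = (x i - A) * q (x i)` with both
`f (x i)` and `x i - A` positive, so `g` has the sign of `q` there, which by interlacing is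
`(-1) ^ (n - i)` (indices from `0`). Hence the number `N i` of zeros of `g` to the right of `x i`
has the parity of `n - i`. Being non-increasing in `i`, `N` must strictly decrease, and a strictly
decreasing map `Fin n → [1, n]` is `i ↦ n - i`; this count is exactly the interlacing.
-/

open Polynomial Finset

lemma prod_pos_iff_even_card_neg {ι : Type*} (s : Finset ι) {v : ι → ℝ}
    (hv : ∀ i ∈ s, v i ≠ 0) : 0 < ∏ i ∈ s, v i ↔ Even #{i ∈ s | v i < 0} := by
  classical
  have hpos : 0 < ∏ i ∈ s with ¬v i < 0, v i :=
    prod_pos fun i hi => by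
      rw [mem_filter, not_lt] at hi
      exact hi.2.lt_of_ne (hv i hi.1).symm
  have hneg : 0 < ∏ i ∈ s with v i < 0, -v i :=
    prod_pos fun i hi => neg_pos.2 (mem_filter.1 hi).2
  have hsign : ∏ i ∈ s with v i < 0, v i =
      (-1) ^ #{i ∈ s | v i < 0} * ∏ i ∈ s with v i < 0, -v i := by
    simpa using prod_neg (s := {i ∈ s | v i < 0}) (fun i => -v i)
  rw [← prod_filter_mul_prod_filter_not s (fun i => v i < 0), mul_pos_iff_of_pos_right hpos,
    hsign, mul_pos_iff_of_pos_right hneg]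
  rcases Nat.even_or_odd #{i ∈ s | v i < 0} with h | h
  · simp [h.neg_one_pow, h]
  · simp [h.neg_one_pow, Nat.not_even_iff_odd.2 h]

lemma eval_prod_X_sub_C_ne_zero_iff {ι : Type*} [Fintype ι] (r : ι → ℝ) (t : ℝ) :
    eval t (∏ i, (X - C (r i))) ≠ 0 ↔ ∀ i, t ≠ r i := by
  simp [eval_prod, prod_ne_zero_iff, sub_eq_zero]

lemma eval_prod_X_sub_C_pos_iff {ι : Type*} [Fintype ι] {r : ι → ℝ} {t : ℝ}
    (ht : ∀ i, t ≠ r i) : 0 < eval t (∏ i, (X - C (r i))) ↔ Even #{i | t < r i} := by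
  simp only [eval_prod, eval_sub, eval_X, eval_C]
  rw [prod_pos_iff_even_card_neg _ fun i _ => sub_ne_zero.2 (ht i)]
  simp only [sub_neg]

section Interlacing

variable {n : ℕ} {x : Fin n → ℝ} {z : Fin (n + 1) → ℝ}

lemma lt_iff_castSucc_lt_of_interlacing (hz : Monotone z)
    (hint : ∀ i : Fin n, z i.castSucc < x i ∧ x i < z i.succ) (i : Fin n) (j : Fin (n + 1)) :
    x i < z j ↔ i.castSucc < j := by
  refine ⟨fun h => lt_of_not_ge fun hj => ?_, fun hj => ?_⟩
  · exact (h.trans_le (hz hj)).not_gt (hint i).1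
  · exact (hint i).2.trans_le (hz (Fin.castSucc_lt_iff_succ_le.1 hj))

lemma ne_of_interlacing (hz : Monotone z)
    (hint : ∀ i : Fin n, z i.castSucc < x i ∧ x i < z i.succ) (i : Fin n) (j : Fin (n + 1)) :
    x i ≠ z j := by
  intro h
  have hj : j ≤ i.castSucc :=
    not_lt.1 fun hj => ((lt_iff_castSucc_lt_of_interlacing hz hint i j).2 hj).ne h
  exact (hz hj).not_gt (h ▸ (hint i).1)

lemma card_filter_lt_of_interlacing (hz : Monotone z)
    (hint : ∀ i : Fin n, z i.castSucc < x i ∧ x i < z i.succ) (i : Fin n) :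
    #{j | x i < z j} = n - i := by
  simp only [lt_iff_castSucc_lt_of_interlacing hz hint, filter_lt_eq_Ioi, Fin.card_Ioi]
  simp

end Interlacing

lemma Fin.eq_sub_of_antitone_of_even_iff {n : ℕ} {N : Fin n → ℕ} (hN : Antitone N)
    (hle : ∀ i, N i ≤ n) (hpar : ∀ i : Fin n, Even (N i) ↔ Even (n - i)) (i : Fin n) :
    N i = n - i := by
  obtain ⟨m, rfl⟩ := Nat.exists_eq_add_one.2 i.pos
  have hanti : StrictAnti N := Fin.strictAnti_iff_succ_lt.2 fun k => by
    refine (hN (Fin.castSucc_le_succ k)).lt_of_ne fun h => ?_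
    have hk : m + 1 - k.castSucc = m + 1 - k.succ + 1 := by
      simp only [Fin.val_castSucc, Fin.val_succ]
      omega
    have := (hpar k.succ).symm.trans (h ▸ hpar k.castSucc)
    rw [hk, Nat.even_add_one] at this
    exact iff_not_self this
  have hpos : ∀ j, 1 ≤ N j := fun j => by
    refine le_trans (Nat.one_le_iff_ne_zero.2 fun h0 => ?_) (hN (Fin.le_last j))
    simpa [h0] using (hpar (Fin.last m)).1
  have hlower : #(Ici i) ≤ #(Icc 1 (N i)) :=
    card_le_card_of_injOn N (fun j hj => mem_Icc.2 ⟨hpos j, hN (mem_Ici.1 hj)⟩)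
      hanti.injective.injOn
  have hupper : #(Iic i) ≤ #(Icc (N i) (m + 1)) :=
    card_le_card_of_injOn N (fun j hj => mem_Icc.2 ⟨hN (mem_Iic.1 hj), hle j⟩)
      hanti.injective.injOn
  rw [Fin.card_Ici, Nat.card_Icc] at hlower
  rw [Fin.card_Iic, Nat.card_Icc] at hupper
  omega

lemma interlacing_of_even_card_iff {n : ℕ} {x y : Fin n → ℝ}
    (hx : Monotone x) (hy : Monotone y) (hne : ∀ i j, x i ≠ y j)
    (hpar : ∀ i : Fin n, Even #{j | x i < y j} ↔ Even (n - i)) :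
    (∀ i, x i < y i) ∧ ∀ i : Fin n, ∀ h : (i : ℕ) + 1 < n, y i < x ⟨(i : ℕ) + 1, h⟩ := by
  have hcard : ∀ i, #{j | x i < y j} = n - i :=
    Fin.eq_sub_of_antitone_of_even_iff
      (fun i k hik => card_le_card <| monotone_filter_right _ fun j _ h => (hx hik).trans_lt h)
      (fun i => (card_filter_le _ _).trans_eq (card_fin n)) hpar
  refine ⟨fun i => lt_of_not_ge fun hyx => ?_, fun i h => lt_of_not_ge fun hxy => ?_⟩
  · have hsub : ({j | x i < y j} : Finset (Fin n)) ⊆ Ioi i := fun j hj =>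
      mem_Ioi.2 (lt_of_not_ge fun hji => (mem_filter.1 hj).2.not_ge ((hy hji).trans hyx))
    have := card_le_card hsub
    rw [hcard, Fin.card_Ioi] at this
    omega
  · have hlt := hxy.lt_of_ne (hne _ _)
    have hsub : Ici i ⊆ ({j | x ⟨(i : ℕ) + 1, h⟩ < y j} : Finset (Fin n)) := fun j hj =>
      mem_filter.2 ⟨mem_univ _, hlt.trans_le (hy (mem_Ici.1 hj))⟩
    have := card_le_card hsub
    rw [hcard, Fin.card_Ici] at this
    simp only at this
    omega

theorem stmt3_general (n : ℕ) (p q g D : Polynomial ℝ) (f : ℝ → ℝ) (c d A : ℝ)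
    (x : Fin n → ℝ) (z : Fin (n + 1) → ℝ) (y : Fin n → ℝ)
    (hx : StrictMono x) (hz : StrictMono z) (hy : Monotone y)
    (hp : p = ∏ i, (X - C (x i)))
    (hq : q = ∏ i, (X - C (z i)))
    (hg : g = ∏ i, (X - C (y i)))
    (hxcd : ∀ i, x i ∈ Set.Ioo c d)
    (hint : ∀ i : Fin n, z i.castSucc < x i ∧ x i < z i.succ)
    (hf : ∀ t ∈ Set.Ioo c d, 0 < f t)
    (hid : ∀ t : ℝ, f t * g.eval t = D.eval t * p.eval t + (t - A) * q.eval t)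
    (hAx : ∀ i : Fin n, A < x i) :
    (∀ i : Fin n, x i < y i) ∧
      ∀ i : Fin n, ∀ h : (i : ℕ) + 1 < n, y i < x ⟨(i : ℕ) + 1, h⟩ := by
  have hxz : ∀ i j, x i ≠ z j := ne_of_interlacing hz.monotone hint
  have hroot : ∀ i, f (x i) * g.eval (x i) = (x i - A) * q.eval (x i) := fun i => by
    have hp0 : p.eval (x i) = 0 := by
      rw [hp, eval_prod]
      exact prod_eq_zero (mem_univ i) (by simp)
    simpa [hp0] using hid (x i)
  have hq0 : ∀ i, q.eval (x i) ≠ 0 := fun i =>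
    hq ▸ (eval_prod_X_sub_C_ne_zero_iff z (x i)).2 (hxz i)
  have hg0 : ∀ i, g.eval (x i) ≠ 0 := fun i =>
    right_ne_zero_of_mul (hroot i ▸ mul_ne_zero (sub_pos.2 (hAx i)).ne' (hq0 i))
  have hxy : ∀ i j, x i ≠ y j := fun i =>
    (eval_prod_X_sub_C_ne_zero_iff y (x i)).1 (hg ▸ hg0 i)
  refine interlacing_of_even_card_iff hx.monotone hy hxy fun i => ?_
  rw [← eval_prod_X_sub_C_pos_iff (hxy i), ← hg, ← mul_pos_iff_of_pos_left (hf _ (hxcd i)),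
    hroot, mul_pos_iff_of_pos_left (sub_pos.2 (hAx i)), hq, eval_prod_X_sub_C_pos_iff (hxz i),
    card_filter_lt_of_interlacing hz.monotone hint]

theorem stmt3 (n : ℕ) (p q g D : Polynomial ℝ) (f : ℝ → ℝ) (c d A : ℝ)
    (x : Fin n → ℝ) (z : Fin (n + 1) → ℝ) (y : Fin n → ℝ)
    (hx : StrictMono x) (hz : StrictMono z) (hy : Monotone y)
    (hp : p = ∏ i, (X - C (x i)))
    (hq : q = ∏ i, (X - C (z i)))
    (hg : g = ∏ i, (X - C (y i)))
    (hxcd : ∀ i, x i ∈ Set.Ioo c d) (hzcd : ∀ i, z i ∈ Set.Ioo c d)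
    (hycd : ∀ i, y i ∈ Set.Ioo c d) (hAcd : A ∈ Set.Ioo c d)
    (hint : ∀ i : Fin n, z i.castSucc < x i ∧ x i < z i.succ)
    (hf : ∀ t ∈ Set.Ioo c d, 0 < f t)
    (hid : ∀ t : ℝ, f t * g.eval t = D.eval t * p.eval t + (t - A) * q.eval t)
    (hpA : p.eval A ≠ 0) (hgA : g.eval A ≠ 0)
    (hAx : ∀ i : Fin n, A < x i) :
    (∀ i : Fin n, x i < y i) ∧
      ∀ i : Fin n, ∀ h : (i : ℕ) + 1 < n, y i < x ⟨(i : ℕ) + 1, h⟩ :=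
  stmt3_general n p q g D f c d A x z y hx hz hy hp hq hg hxcd hint hf hid hAx
end

section
/- Under the hypotheses of the main interlacing theorem (f·g = D·p + (x−A)·q, f > 0 on (c,d), interlacing zeros of p and q, g monic of degree n with real zeros, g and p coprime), if A > x_n (A exceeds the largest zero of p), then the zeros y_1 < ... < y_n of g satisfy y_1 < x_1 < y_2 < x_2 < ... < x_{n−1} < y_n < x_n < A. -/
open Polynomial Finset

/-!
At a zero `x i` of `p` the identity gives `f (x i) * g (x i) = (x i - A) * q (x i)`. Interlacing
fixes the sign of `q (x i)` as `(-1) ^ (n - i)`, and `x i < A`, so `g (x i)` has sign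
`(-1) ^ (n - i + 1)`. On the other hand the sign of `g (x i)` is `(-1) ^ cᵢ`, where `cᵢ` is the
number of zeros of `g` above `x i`. The counts `cᵢ` are antitone in `i`, at most `n`, and change
parity at every step, which forces `cᵢ = n - 1 - i`; for a sorted `y` this is the interlacing.
-/

lemma eval_prod_X_sub_C {ι : Type*} [Fintype ι] (w : ι → ℝ) (t : ℝ) :
    (∏ i, (X - C (w i))).eval t = ∏ i, (t - w i) := by
  simp [eval_prod]

lemma neg_one_pow_card_mul_eval_prod_X_sub_C_pos {ι : Type*} [Fintype ι] (w : ι → ℝ) {t : ℝ}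
    (ht : ∀ j, t ≠ w j) :
    0 < (-1 : ℝ) ^ #{j | t < w j} * (∏ j, (X - C (w j))).eval t := by
  rw [eval_prod_X_sub_C, ← prod_filter_mul_prod_filter_not univ (fun j => t < w j), ← mul_assoc,
    ← prod_const, ← prod_mul_distrib]
  refine mul_pos (prod_pos fun j hj => ?_) (prod_pos fun j hj => ?_)
  · linarith [(mem_filter.mp hj).2]
  · have hle := not_lt.mp (mem_filter.mp hj).2
    exact sub_pos.mpr (lt_of_le_of_ne hle (ht j).symm)

lemma mod_two_eq_of_neg_one_pow_mul_pos {a b : ℕ} {v : ℝ} (ha : 0 < (-1 : ℝ) ^ a * v)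
    (hb : 0 < (-1 : ℝ) ^ b * v) : a % 2 = b % 2 := by
  rw [neg_one_pow_eq_pow_mod_two] at ha hb
  rcases Nat.mod_two_eq_zero_or_one a with h | h <;>
    rcases Nat.mod_two_eq_zero_or_one b with h' | h' <;>
    simp only [h, h', pow_zero, pow_one, one_mul, neg_one_mul] at ha hb <;>
    first | rfl | linarith

section Interlacing

variable {n : ℕ} {z : Fin (n + 1) → ℝ} {t : ℝ} {i : Fin n}

lemma ne_apply_of_mem_Ioo (hz : Monotone z) (h₁ : z i.castSucc < t) (h₂ : t < z i.succ)
    (j : Fin (n + 1)) : t ≠ z j := by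
  rcases le_or_gt j i.castSucc with hj | hj
  · exact (lt_of_le_of_lt (hz hj) h₁).ne'
  · exact (lt_of_lt_of_le h₂ (hz (Fin.castSucc_lt_iff_succ_le.mp hj))).ne

lemma card_filter_lt_apply_of_mem_Ioo (hz : Monotone z) (h₁ : z i.castSucc < t)
    (h₂ : t < z i.succ) : #{j | t < z j} = n - i := by
  have hfilter : ({j | t < z j} : Finset (Fin (n + 1))) = Ici i.succ := by
    ext j
    simp only [mem_filter, mem_univ, true_and, mem_Ici]
    constructor
    · exact fun htj => by_contra fun hj =>
        htj.not_gt ((hz (Fin.le_castSucc_iff.mpr (not_le.mp hj))).trans_lt h₁)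
    · exact fun hj => lt_of_lt_of_le h₂ (hz hj)
  rw [hfilter, Fin.card_Ici, Fin.val_succ]
  omega

lemma neg_one_pow_mul_eval_prod_X_sub_C_pos (hz : Monotone z) (h₁ : z i.castSucc < t)
    (h₂ : t < z i.succ) : 0 < (-1 : ℝ) ^ (n - i) * (∏ j, (X - C (z j))).eval t := by
  rw [← card_filter_lt_apply_of_mem_Ioo hz h₁ h₂]
  exact neg_one_pow_card_mul_eval_prod_X_sub_C_pos z (ne_apply_of_mem_Ioo hz h₁ h₂)

end Interlacing

lemma antitone_card_filter_lt {ι κ : Type*} [Preorder ι] [Fintype κ] {x : ι → ℝ} (hx : Monotone x)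
    (y : κ → ℝ) :
    Antitone fun i => #{j | x i < y j} := fun _ _ hii' =>
  card_le_card (monotone_filter_right _ fun _ _ hlt => (hx hii').trans_lt hlt)

section Counting

variable {n : ℕ} {y : Fin n → ℝ} {t : ℝ}

lemma apply_le_of_card_filter_lt (hy : Monotone y) {i : Fin n} (h : #{j | t < y j} < n - i) :
    y i ≤ t := by
  by_contra! hti
  have hsub : Ici i ⊆ ({j | t < y j} : Finset (Fin n)) := fun j hj =>
    mem_filter.mpr ⟨mem_univ j, lt_of_lt_of_le hti (hy (mem_Ici.mp hj))⟩
  have := card_le_card hsub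
  rw [Fin.card_Ici] at this
  omega

lemma lt_apply_of_lt_card_filter (hy : Monotone y) {k : Fin n} (h : n - 1 - k < #{j | t < y j}) :
    t < y k := by
  by_contra! hyt
  have hsub : ({j | t < y j} : Finset (Fin n)) ⊆ Ioi k := fun j hj =>
    mem_Ioi.mpr (lt_of_not_ge fun hjk => (mem_filter.mp hj).2.not_ge ((hy hjk).trans hyt))
  have := card_le_card hsub
  rw [Fin.card_Ioi] at this
  omega

end Counting

theorem Fin.eq_sub_of_antitone_of_mod_two {n : ℕ} {c : Fin n → ℕ} (hc : Antitone c)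
    (hle : ∀ i, c i ≤ n) (hpar : ∀ i : Fin n, c i % 2 = (n - i + 1) % 2) (i : Fin n) :
    c i = n - 1 - i := by
  have hstep : ∀ k (hk : k + 1 < n), c ⟨k + 1, hk⟩ + 1 ≤ c ⟨k, by omega⟩ := by
    intro k hk
    have hmono := hc (Fin.mk_le_mk.mpr (Nat.le_succ k) : (⟨k, by omega⟩ : Fin n) ≤ ⟨k + 1, hk⟩)
    have h₀ := hpar ⟨k, by omega⟩
    have h₁ := hpar ⟨k + 1, hk⟩
    simp only at h₀ h₁
    omega
  have hupper : ∀ k (hk : k < n), c ⟨k, hk⟩ + k ≤ n - 1 := by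
    intro k
    induction k with
    | zero => intro hk; have := hle ⟨0, hk⟩; have := hpar ⟨0, hk⟩; simp only at *; omega
    | succ k ih => intro hk; have := ih (by omega); have := hstep k hk; omega
  have hlower : ∀ m k (hk : k < n), n - 1 - k = m → n - 1 ≤ c ⟨k, hk⟩ + k := by
    intro m
    induction m with
    | zero => intro k hk hm; omega
    | succ m ih =>
      intro k hk hm
      have := ih (k + 1) (by omega) (by omega)
      have := hstep k (by omega)
      omega
  obtain ⟨k, hk⟩ := i
  have := hupper k hk
  have := hlower _ k hk rfl
  simp only
  omega

theorem stmt4_general (n : ℕ) (p q g D : Polynomial ℝ) (f : ℝ → ℝ) (c d A : ℝ)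
    (x : Fin n → ℝ) (z : Fin (n + 1) → ℝ) (y : Fin n → ℝ)
    (hx : StrictMono x) (hz : StrictMono z) (hy : Monotone y)
    (hp : p = ∏ i, (X - C (x i)))
    (hq : q = ∏ i, (X - C (z i)))
    (hg : g = ∏ i, (X - C (y i)))
    (hxcd : ∀ i, x i ∈ Set.Ioo c d)
    (hint : ∀ i : Fin n, z i.castSucc < x i ∧ x i < z i.succ)
    (hf : ∀ t ∈ Set.Ioo c d, 0 < f t)
    (hid : ∀ t : ℝ, f t * g.eval t = D.eval t * p.eval t + (t - A) * q.eval t)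
    (hxA : ∀ i : Fin n, x i < A) :
    (∀ i : Fin n, y i < x i) ∧
      ∀ i : Fin n, ∀ h : (i : ℕ) + 1 < n, x i < y ⟨(i : ℕ) + 1, h⟩ := by
  have hg_sign (i : Fin n) : 0 < (-1 : ℝ) ^ (n - i + 1) * g.eval (x i) := by
    have hpx : p.eval (x i) = 0 := by
      rw [hp, eval_prod_X_sub_C]
      exact prod_eq_zero (mem_univ i) (sub_self _)
    have hfg : f (x i) * g.eval (x i) = (x i - A) * q.eval (x i) := by
      simpa [hpx] using hid (x i)
    have hq_sign := hq ▸ neg_one_pow_mul_eval_prod_X_sub_C_pos hz.monotone (hint i).1 (hint i).2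
    refine pos_of_mul_pos_right ?_ (hf _ (hxcd i)).le
    calc 0 < (A - x i) * ((-1) ^ (n - i) * q.eval (x i)) := mul_pos (sub_pos.mpr (hxA i)) hq_sign
      _ = f (x i) * ((-1) ^ (n - i + 1) * g.eval (x i)) := by
        rw [pow_succ]; linear_combination (-1 : ℝ) ^ (n - i) * hfg
  have hxy (i j : Fin n) : x i ≠ y j := by
    have hg0 : g.eval (x i) ≠ 0 := fun h => by simpa [h] using hg_sign i
    rw [hg, eval_prod_X_sub_C, prod_ne_zero_iff] at hg0
    exact sub_ne_zero.mp (hg0 j (mem_univ j))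
  have hcount : ∀ i : Fin n, #{j | x i < y j} = n - 1 - i :=
    Fin.eq_sub_of_antitone_of_mod_two (antitone_card_filter_lt hx.monotone y)
      (fun i => (card_filter_le _ _).trans_eq (card_fin n)) fun i =>
        mod_two_eq_of_neg_one_pow_mul_pos
          (hg ▸ neg_one_pow_card_mul_eval_prod_X_sub_C_pos y (hxy i))
          (hg_sign i)
  refine ⟨fun i => (apply_le_of_card_filter_lt hy ?_).lt_of_ne (hxy i i).symm,
    fun i h => lt_apply_of_lt_card_filter hy ?_⟩
  · rw [hcount]
    omega
  · rw [hcount, Fin.val_mk]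
    omega

theorem stmt4 (n : ℕ) (p q g D : Polynomial ℝ) (f : ℝ → ℝ) (c d A : ℝ)
    (x : Fin n → ℝ) (z : Fin (n + 1) → ℝ) (y : Fin n → ℝ)
    (hx : StrictMono x) (hz : StrictMono z) (hy : Monotone y)
    (hp : p = ∏ i, (X - C (x i)))
    (hq : q = ∏ i, (X - C (z i)))
    (hg : g = ∏ i, (X - C (y i)))
    (hxcd : ∀ i, x i ∈ Set.Ioo c d) (hzcd : ∀ i, z i ∈ Set.Ioo c d)
    (hycd : ∀ i, y i ∈ Set.Ioo c d) (hAcd : A ∈ Set.Ioo c d)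
    (hint : ∀ i : Fin n, z i.castSucc < x i ∧ x i < z i.succ)
    (hf : ∀ t ∈ Set.Ioo c d, 0 < f t)
    (hid : ∀ t : ℝ, f t * g.eval t = D.eval t * p.eval t + (t - A) * q.eval t)
    (hpA : p.eval A ≠ 0) (hgA : g.eval A ≠ 0)
    (hxA : ∀ i : Fin n, x i < A) :
    (∀ i : Fin n, y i < x i) ∧
      ∀ i : Fin n, ∀ h : (i : ℕ) + 1 < n, x i < y ⟨(i : ℕ) + 1, h⟩ :=
  stmt4_general n p q g D f c d A x z y hx hz hy hp hq hg hxcd hint hf hid hxA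
end

section
/- The monic Meixner–Pollaczek polynomials satisfy the mixed recurrence (λ² + x²)·P_n^{(λ+1)}(x;φ) = (λ(2λ+n)/(2 sin²φ))·P_n^{(λ)}(x;φ) + (x − λ cot φ)·P_{n+1}^{(λ)}(x;φ) for all x ∈ ℝ, λ > 0, 0 < φ < π, n ∈ ℕ. -/
open Finset

/-- Pochhammer symbol `(a)ₙ` for a complex number `a`. -/
noncomputable def poch (a : ℂ) (n : ℕ) : ℂ := ∏ k ∈ Finset.range n, (a + k)

lemma poch_succ (a : ℂ) (m : ℕ) : poch a (m + 1) = poch a m * (a + m) := by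
  simp [poch, Finset.prod_range_succ]

lemma poch_succ' (a : ℂ) (m : ℕ) : poch a (m + 1) = a * poch (a + 1) m := by
  unfold poch
  rw [Finset.prod_range_succ']
  simp only [Nat.cast_zero, add_zero, mul_comm]
  congr 1
  refine Finset.prod_congr rfl fun k _ => ?_
  push_cast; ring

lemma poch_zero (a : ℂ) : poch a 0 = 1 := by simp [poch]

lemma poch_one (a : ℂ) : poch a 1 = a := by simp [poch]

lemma poch_add (a : ℂ) (k j : ℕ) : poch a (k + j) = poch a k * poch (a + k) j := by
  unfold poch
  rw [Finset.prod_range_add]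
  congr 1
  refine Finset.prod_congr rfl fun i _ => ?_
  push_cast; ring

lemma poch_neg_nat (n k : ℕ) : poch (-(n : ℂ)) k = (-1) ^ k * (n.descFactorial k : ℂ) := by
  induction k with
  | zero => simp [poch]
  | succ k ih =>
    rw [poch_succ, ih, Nat.descFactorial_succ]
    rcases lt_or_ge k n with h | h
    · have : ((n - k : ℕ) : ℂ) = (n : ℂ) - k := by
        push_cast [Nat.cast_sub h.le]; ring
      push_cast [this]; ring
    · have h1 : n - k = 0 := Nat.sub_eq_zero_of_le h
      rcases eq_or_lt_of_le h with h2 | h2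
      · rw [h1]; subst h2; push_cast; ring
      · have : n.descFactorial k = 0 := Nat.descFactorial_eq_zero_iff_lt.2 h2
        rw [this, h1]; push_cast; ring

lemma poch_pos_ne_zero (r : ℝ) (hr : 0 < r) (k : ℕ) : poch (r : ℂ) k ≠ 0 := by
  unfold poch
  refine Finset.prod_ne_zero_iff.2 fun i _ => ?_
  have : ((r : ℂ) + i) = ((r + i : ℝ) : ℂ) := by push_cast; ring
  rw [this, Complex.ofReal_ne_zero]
  positivity

noncomputable def Asum (b c z : ℂ) (n : ℕ) : ℂ :=
  ∑ k ∈ Finset.range (n + 1),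
    (n.choose k : ℂ) * (-1) ^ k * poch b k * poch (c + k) (n - k) * z ^ k

noncomputable def tA (b c z : ℂ) (n : ℕ) : ℂ :=
  ∑ k ∈ Finset.range (n + 1),
    (n.choose k : ℂ) * (-1) ^ k * poch b (k + 1) * poch (c + (k + 1 : ℕ)) (n - k) * z ^ k

lemma shift (f : ℕ → ℂ) (z : ℂ) (m : ℕ) :
    z * ∑ k ∈ Finset.range m, f k * z ^ k
      = ∑ k ∈ Finset.range (m + 1), (if k = 0 then 0 else f (k - 1) * z ^ k) := by
  rw [Finset.sum_range_succ', Finset.mul_sum]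
  simp only [Nat.succ_ne_zero, if_false, reduceIte, Nat.add_sub_cancel, add_zero]
  exact Finset.sum_congr rfl fun k _ => by ring

lemma C2 (b c z : ℂ) (n : ℕ) :
    Asum b c z (n + 1) + z * tA b c z n = (c + n) * Asum b c z n := by
  have h2 : z * tA b c z n = ∑ k ∈ Finset.range (n + 2),
      (if k = 0 then 0 else
        (n.choose (k-1) : ℂ) * (-1) ^ (k-1) * poch b ((k-1) + 1) *
          poch (c + ((k-1) + 1 : ℕ)) (n - (k-1)) * z ^ k) := by
    rw [tA, shift (fun k => (n.choose k : ℂ) * (-1) ^ k * poch b (k + 1) *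
      poch (c + (k + 1 : ℕ)) (n - k)) z (n+1)]
  have h3 : (c + n) * Asum b c z n = ∑ k ∈ Finset.range (n + 2),
      (c + n) * ((n.choose k : ℂ) * (-1) ^ k * poch b k * poch (c + k) (n - k) * z ^ k) := by
    rw [Finset.sum_range_succ, Nat.choose_succ_self]
    simp [Asum, Finset.mul_sum]
  rw [h2, h3, Asum, show n + 1 + 1 = n + 2 from rfl, ← Finset.sum_add_distrib]
  refine Finset.sum_congr rfl fun k hk => ?_
  rcases k with _ | j
  · simp only [if_pos rfl, add_zero, Nat.choose_zero_right, pow_zero, Nat.cast_one]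
    simp [poch, Finset.prod_range_succ]
    ring
  · simp only [Nat.succ_ne_zero, if_false, Nat.add_sub_cancel]
    have hj : j ≤ n := by
      have := Finset.mem_range.mp hk; omega
    rcases eq_or_lt_of_le hj with rfl | hlt
    · have h0 : j + 1 - (j + 1) = 0 := by omega
      simp only [Nat.choose_succ_self, Nat.cast_zero, Nat.sub_self, Nat.choose_self,
        Nat.cast_one, h0]
      simp only [poch, Finset.range_zero, Finset.prod_empty]
      ring
    · obtain ⟨m, rfl⟩ : ∃ m, n = j + m + 1 := ⟨n - j - 1, by omega⟩
      have e1 : j + m + 1 + 1 - (j + 1) = m + 1 := by omega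
      have e2 : j + m + 1 - (j + 1) = m := by omega
      have e3 : j + m + 1 - j = m + 1 := by omega
      rw [e1, e2, e3, poch_succ (c + ((j:ℕ) + 1 : ℕ)) m]
      have hpas : (((j + m + 1 + 1).choose (j + 1) : ℕ) : ℂ)
          = ((j + m + 1).choose (j + 1) : ℂ) + ((j + m + 1).choose j : ℂ) := by
        rw [show j + m + 1 + 1 = (j + m + 1) + 1 from rfl, Nat.choose_succ_succ']
        push_cast; ring
      rw [hpas]
      push_cast
      ring

lemma C1 (b c z : ℂ) (n : ℕ) :
    b * (c - b) * (z * Asum (b + 1) (c + 2) z n) + c * tA b c z n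
      = b * Asum b c z (n + 1) + c * (z * tA b c z n) := by
  have hsh : z * Asum (b + 1) (c + 2) z n = ∑ k ∈ Finset.range (n + 2),
      (if k = 0 then 0 else
        (n.choose (k-1) : ℂ) * (-1) ^ (k-1) * poch (b+1) (k-1) *
          poch ((c+2) + (k-1 : ℕ)) (n - (k-1)) * z ^ k) := by
    rw [Asum, shift (fun k => (n.choose k : ℂ) * (-1) ^ k * poch (b+1) k *
      poch ((c+2) + k) (n - k)) z (n+1)]
  have hsh2 : z * tA b c z n = ∑ k ∈ Finset.range (n + 2),
      (if k = 0 then 0 else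
        (n.choose (k-1) : ℂ) * (-1) ^ (k-1) * poch b ((k-1) + 1) *
          poch (c + ((k-1) + 1 : ℕ)) (n - (k-1)) * z ^ k) := by
    rw [tA, shift (fun k => (n.choose k : ℂ) * (-1) ^ k * poch b (k + 1) *
      poch (c + (k + 1 : ℕ)) (n - k)) z (n+1)]
  have hta : tA b c z n = ∑ k ∈ Finset.range (n + 2),
      (n.choose k : ℂ) * (-1) ^ k * poch b (k + 1) *
        poch (c + (k + 1 : ℕ)) (n - k) * z ^ k := by
    rw [Finset.sum_range_succ, Nat.choose_succ_self]
    simp [tA]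
  rw [hsh, hsh2, hta, Asum, show n + 1 + 1 = n + 2 from rfl, Finset.mul_sum, Finset.mul_sum,
    Finset.mul_sum, Finset.mul_sum, ← Finset.sum_add_distrib, ← Finset.sum_add_distrib]
  refine Finset.sum_congr rfl fun k hk => ?_
  rcases k with _ | j
  · simp only [reduceIte, mul_zero, zero_add, add_zero, Nat.choose_zero_right, Nat.cast_one,
      pow_zero, Nat.sub_zero, Nat.cast_zero, poch_zero, poch_one, mul_one, one_mul]
    rw [poch_succ' c n]
    ring
  · simp only [Nat.succ_ne_zero, if_false, Nat.add_sub_cancel]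
    have hj : j ≤ n := by
      have := Finset.mem_range.mp hk; omega
    rcases eq_or_lt_of_le hj with rfl | hlt
    · have h0 : j + 1 - (j + 1) = 0 := by omega
      have h0' : j - (j + 1) = 0 := by omega
      simp only [Nat.choose_succ_self, Nat.cast_zero, Nat.sub_self, Nat.choose_self,
        Nat.cast_one, h0, h0', poch_zero]
      rw [poch_succ' b j]
      ring
    · obtain ⟨m, rfl⟩ : ∃ m, n = j + m + 1 := ⟨n - j - 1, by omega⟩
      have e1 : j + m + 1 + 1 - (j + 1) = m + 1 := by omega
      have e2 : j + m + 1 - (j + 1) = m := by omega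
      have e3 : j + m + 1 - j = m + 1 := by omega
      rw [e1, e2, e3]
      have ej : (c + 2) + ((j : ℕ) : ℂ) = c + ((j + 1 + 1 : ℕ) : ℂ) := by push_cast; ring
      rw [ej, poch_succ (c + ((j + 1 + 1 : ℕ) : ℂ)) m]
      rw [poch_succ b (j + 1), poch_succ' b j, poch_succ' (c + ((j + 1 : ℕ) : ℂ)) m]
      have e5 : (c + ((j + 1 : ℕ) : ℂ)) + 1 = c + ((j + 1 + 1 : ℕ) : ℂ) := by
        push_cast; ring
      rw [e5]
      have hpas := Nat.choose_succ_succ (j + m + 1) j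
      have hrec := Nat.choose_succ_right_eq (j + m + 1) j
      rw [show j + m + 1 - j = m + 1 by omega] at hrec
      have hpasC : (((j + m + 1 + 1).choose (j + 1) : ℕ) : ℂ)
          = ((j + m + 1).choose j : ℂ) + ((j + m + 1).choose (j + 1) : ℂ) := by
        rw [hpas]; push_cast; ring
      have hrecC : ((j + m + 1).choose (j + 1) : ℂ) * ((j : ℂ) + 1)
          = ((j + m + 1).choose j : ℂ) * ((m : ℂ) + 1) := by
        exact_mod_cast congrArg (Nat.cast : ℕ → ℂ) hrec
      rw [hpasC]
      push_cast
      linear_combination (-((c - b) * (-1) ^ j * b * poch (b + 1) j *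
        poch (c + ((j : ℂ) + 1 + 1)) m * z ^ (j + 1))) * hrecC

/-- Monic Meixner–Pollaczek polynomial `P_n^{(λ)}(x;φ)`, as a function of a complex
variable `x`, defined via the terminating Gauss hypergeometric sum. -/
noncomputable def MP (n : ℕ) (lam φ : ℝ) (x : ℂ) : ℂ :=
  Complex.I ^ n * poch (2 * (lam : ℂ)) n *
    (Complex.exp (2 * Complex.I * φ) / (Complex.exp (2 * Complex.I * φ) - 1)) ^ n *
    ∑ k ∈ Finset.range (n + 1),
      poch (-(n : ℂ)) k * poch ((lam : ℂ) + Complex.I * x) k /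
          (poch (2 * (lam : ℂ)) k * (Nat.factorial k : ℂ)) *
        (1 - Complex.exp (-(2 * Complex.I * φ))) ^ k

lemma star (b c z : ℂ) (n : ℕ) :
    b * (c - b) * z ^ 2 * Asum (b + 1) (c + 2) z n + c * (c + n) * (1 - z) * Asum b c z n
      = (b * z + c * (1 - z)) * Asum b c z (n + 1) := by
  linear_combination z * C1 b c z n - c * (1 - z) * C2 b c z n

lemma MP_eq (n : ℕ) (lam φ : ℝ) (hlam : 0 < lam) (x : ℝ)
    (hcz : Complex.exp (2 * Complex.I * φ) / (Complex.exp (2 * Complex.I * φ) - 1) *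
      (1 - Complex.exp (-(2 * Complex.I * φ))) = 1) :
    MP n lam φ x * (1 - Complex.exp (-(2 * Complex.I * φ))) ^ n
      = Complex.I ^ n * Asum ((lam : ℂ) + Complex.I * x) (2 * lam)
          (1 - Complex.exp (-(2 * Complex.I * φ))) n := by
  have hpow : (Complex.exp (2 * Complex.I * φ) / (Complex.exp (2 * Complex.I * φ) - 1)) ^ n *
      (1 - Complex.exp (-(2 * Complex.I * φ))) ^ n = 1 := by
    rw [← mul_pow, hcz, one_pow]
  have key : poch (2 * (lam : ℂ)) n *
      ∑ k ∈ Finset.range (n + 1),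
        poch (-(n : ℂ)) k * poch ((lam : ℂ) + Complex.I * x) k /
            (poch (2 * (lam : ℂ)) k * (Nat.factorial k : ℂ)) *
          (1 - Complex.exp (-(2 * Complex.I * φ))) ^ k
      = Asum ((lam : ℂ) + Complex.I * x) (2 * lam)
          (1 - Complex.exp (-(2 * Complex.I * φ))) n := by
    rw [Asum, Finset.mul_sum]
    refine Finset.sum_congr rfl fun k hk => ?_
    obtain ⟨m, rfl⟩ : ∃ m, n = k + m := ⟨n - k, by
      have := Finset.mem_range.mp hk; omega⟩
    rw [poch_add (2 * (lam : ℂ)) k m, poch_neg_nat,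
      Nat.descFactorial_eq_factorial_mul_choose, show k + m - k = m by omega]
    have h1 : poch (2 * (lam : ℂ)) k ≠ 0 := by
      have h2 : (2 * (lam : ℂ)) = ((2 * lam : ℝ) : ℂ) := by push_cast; ring
      rw [h2]; exact poch_pos_ne_zero _ (by linarith) k
    have h2 : ((k.factorial : ℕ) : ℂ) ≠ 0 := Nat.cast_ne_zero.mpr k.factorial_ne_zero
    field_simp
    push_cast
    ring
  calc MP n lam φ x * (1 - Complex.exp (-(2 * Complex.I * φ))) ^ n
      = Complex.I ^ n *
          ((Complex.exp (2 * Complex.I * φ) / (Complex.exp (2 * Complex.I * φ) - 1)) ^ n *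
            (1 - Complex.exp (-(2 * Complex.I * φ))) ^ n) *
          (poch (2 * (lam : ℂ)) n *
            ∑ k ∈ Finset.range (n + 1),
              poch (-(n : ℂ)) k * poch ((lam : ℂ) + Complex.I * x) k /
                  (poch (2 * (lam : ℂ)) k * (Nat.factorial k : ℂ)) *
                (1 - Complex.exp (-(2 * Complex.I * φ))) ^ k) := by
        rw [MP]; ring
    _ = Complex.I ^ n * Asum ((lam : ℂ) + Complex.I * x) (2 * lam)
          (1 - Complex.exp (-(2 * Complex.I * φ))) n := by
        rw [hpow, key]; ring

theorem stmt8 (n : ℕ) (lam φ : ℝ) (hlam : 0 < lam) (hφ1 : 0 < φ) (hφ2 : φ < Real.pi)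
    (x : ℝ) :
    ((lam : ℂ) ^ 2 + (x : ℂ) ^ 2) * MP n (lam + 1) φ x =
      ((lam : ℂ) * (2 * lam + n) / (2 * (Real.sin φ : ℂ) ^ 2)) * MP n lam φ x +
        ((x : ℂ) - (lam : ℂ) * ((Real.cos φ : ℂ) / (Real.sin φ : ℂ))) * MP (n + 1) lam φ x := by
  have hs0 : 0 < Real.sin φ := Real.sin_pos_of_pos_of_lt_pi hφ1 hφ2
  have hs : (Real.sin φ : ℂ) ≠ 0 := Complex.ofReal_ne_zero.mpr (ne_of_gt hs0)
  set e := Complex.exp (2 * Complex.I * φ) with he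
  set f := Complex.exp (-(2 * Complex.I * φ)) with hf
  set z : ℂ := 1 - f with hzdef
  set b := (lam : ℂ) + Complex.I * x with hb
  have hef : e * f = 1 := by
    rw [he, hf, ← Complex.exp_add]
    norm_num
  have hcos2 : ((Real.cos (2 * φ) : ℝ) : ℂ) = (e + f) / 2 := by
    rw [Complex.ofReal_cos, Complex.cos,
      show ((2 * φ : ℝ) : ℂ) * Complex.I = 2 * Complex.I * φ by push_cast; ring,
      show -((2 * φ : ℝ) : ℂ) * Complex.I = -(2 * Complex.I * φ) by push_cast; ring]
  have hsin2 : ((Real.sin (2 * φ) : ℝ) : ℂ) = (f - e) * Complex.I / 2 := by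
    rw [Complex.ofReal_sin, Complex.sin,
      show ((2 * φ : ℝ) : ℂ) * Complex.I = 2 * Complex.I * φ by push_cast; ring,
      show -((2 * φ : ℝ) : ℂ) * Complex.I = -(2 * Complex.I * φ) by push_cast; ring]
  have hsq : ((Real.sin φ : ℂ)) ^ 2 = 1 / 2 - ((Real.cos (2 * φ) : ℝ) : ℂ) / 2 := by
    rw [← Complex.ofReal_pow, Real.sin_sq_eq_half_sub]
    push_cast
    ring
  have T1 : 4 * (Real.sin φ : ℂ) ^ 2 = -(z ^ 2) * e := by
    rw [hsq, hcos2, hzdef]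
    linear_combination (f - 2) * hef
  have hz2 : z ^ 2 = -4 * (Real.sin φ : ℂ) ^ 2 * f := by
    linear_combination f * T1 - z ^ 2 * hef
  have hz : z ≠ 0 := by
    intro h0
    rw [h0] at hz2
    have h1 : ((Real.sin φ : ℂ)) ^ 2 * f = 0 := by linear_combination (1 / 4 : ℂ) * hz2
    rcases mul_eq_zero.mp h1 with h | h
    · exact hs (pow_eq_zero_iff (two_ne_zero) |>.mp h)
    · exact Complex.exp_ne_zero _ h
  have hez : e - 1 = e * z := by
    rw [hzdef]; linear_combination hef
  have he1 : e - 1 ≠ 0 := by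
    rw [hez]; exact mul_ne_zero (Complex.exp_ne_zero _) hz
  have hcz : e / (e - 1) * z = 1 := by
    field_simp
    linear_combination -hez
  have T2 : (Real.cos φ : ℂ) * z = Complex.I * (2 - z) * (Real.sin φ : ℂ) := by
    apply mul_right_cancel₀ hs
    have hc1 : ((Real.sin (2 * φ) : ℝ) : ℂ) = 2 * (Real.sin φ : ℂ) * (Real.cos φ : ℂ) := by
      exact_mod_cast congrArg (fun t : ℝ => (t : ℂ)) (Real.sin_two_mul φ)
    have hc2 : (Real.sin φ : ℂ) * (Real.cos φ : ℂ) = (f - e) * Complex.I / 4 := by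
      linear_combination -hc1 / 2 + hsin2 / 2
    calc (Real.cos φ : ℂ) * z * (Real.sin φ : ℂ)
        = ((Real.sin φ : ℂ) * (Real.cos φ : ℂ)) * z := by ring
      _ = ((f - e) * Complex.I / 4) * z := by rw [hc2]
      _ = Complex.I * (2 - z) * ((Real.sin φ : ℂ)) ^ 2 := by
          rw [hsq, hcos2, hzdef]
          linear_combination (Complex.I / 2) * hef
      _ = Complex.I * (2 - z) * (Real.sin φ : ℂ) * (Real.sin φ : ℂ) := by ring
  -- MP reductions
  have HA := MP_eq n lam φ hlam x hcz
  have HA1 := MP_eq (n + 1) lam φ hlam x hcz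
  have HB0 := MP_eq n (lam + 1) φ (by linarith) x hcz
  rw [← hf, ← hzdef] at HA HA1 HB0
  rw [← hb] at HA HA1
  have HB : MP n (lam + 1) φ x * z ^ n
      = Complex.I ^ n * Asum (b + 1) (2 * (lam : ℂ) + 2) z n := by
    rw [HB0, show ((lam + 1 : ℝ) : ℂ) + Complex.I * x = b + 1 by rw [hb]; push_cast; ring,
      show (2 * ((lam + 1 : ℝ) : ℂ)) = 2 * (lam : ℂ) + 2 by push_cast; ring]
  have hstar := star b (2 * (lam : ℂ)) z n
  -- coefficient identities
  have hbb : (lam : ℂ) ^ 2 + (x : ℂ) ^ 2 = b * (2 * lam - b) := by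
    rw [hb]; linear_combination (x : ℂ) ^ 2 * Complex.I_sq
  have hco : ((x : ℂ) - (lam : ℂ) * ((Real.cos φ : ℂ) / (Real.sin φ : ℂ))) * z
      = -Complex.I * (b * z + 2 * lam * f) := by
    apply mul_right_cancel₀ hs
    have hdiv : (Real.cos φ : ℂ) / (Real.sin φ : ℂ) * (Real.sin φ : ℂ) = (Real.cos φ : ℂ) :=
      div_mul_cancel₀ _ hs
    calc ((x : ℂ) - (lam : ℂ) * ((Real.cos φ : ℂ) / (Real.sin φ : ℂ))) * z * (Real.sin φ : ℂ)
        = (x : ℂ) * z * (Real.sin φ : ℂ)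
          - (lam : ℂ) * ((Real.cos φ : ℂ) / (Real.sin φ : ℂ) * (Real.sin φ : ℂ)) * z := by
          ring
      _ = (x : ℂ) * z * (Real.sin φ : ℂ) - (lam : ℂ) * ((Real.cos φ : ℂ) * z) := by
          rw [hdiv]; ring
      _ = -Complex.I * (b * z + 2 * lam * f) * (Real.sin φ : ℂ) := by
          rw [T2, hb, hzdef]
          linear_combination ((x : ℂ) * (1 - f) * (Real.sin φ : ℂ)) * Complex.I_sq
  have hR1 : ((lam : ℂ) * (2 * lam + n) / (2 * (Real.sin φ : ℂ) ^ 2)) * z ^ 2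
      = -2 * lam * (2 * lam + n) * f := by
    have h2s : 2 * (Real.sin φ : ℂ) ^ 2 ≠ 0 := mul_ne_zero two_ne_zero (pow_ne_zero 2 hs)
    rw [div_mul_eq_mul_div, div_eq_iff h2s, hz2]
    ring
  -- final assembly
  suffices h : (((lam : ℂ) ^ 2 + (x : ℂ) ^ 2) * MP n (lam + 1) φ x) * z ^ (n + 2) =
      (((lam : ℂ) * (2 * lam + n) / (2 * (Real.sin φ : ℂ) ^ 2)) * MP n lam φ x +
        ((x : ℂ) - (lam : ℂ) * ((Real.cos φ : ℂ) / (Real.sin φ : ℂ))) * MP (n + 1) lam φ x) *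
        z ^ (n + 2) by
    exact mul_right_cancel₀ (pow_ne_zero _ hz) h
  have hfz : f = 1 - z := by rw [hzdef]; ring
  calc (((lam : ℂ) ^ 2 + (x : ℂ) ^ 2) * MP n (lam + 1) φ x) * z ^ (n + 2)
      = (b * (2 * lam - b)) * z ^ 2 * (MP n (lam + 1) φ x * z ^ n) := by
        rw [← hbb]; ring
    _ = Complex.I ^ n * (b * (2 * lam - b) * z ^ 2 *
          Asum (b + 1) (2 * (lam : ℂ) + 2) z n) := by rw [HB]; ring
    _ = Complex.I ^ n * ((b * z + 2 * lam * (1 - z)) * Asum b (2 * (lam : ℂ)) z (n + 1)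
          - 2 * lam * (2 * lam + n) * (1 - z) * Asum b (2 * (lam : ℂ)) z n) := by
        rw [mul_comm (Complex.I ^ n)]
        rw [mul_comm (Complex.I ^ n)]
        congr 1
        linear_combination hstar
    _ = (((lam : ℂ) * (2 * lam + n) / (2 * (Real.sin φ : ℂ) ^ 2)) * MP n lam φ x +
        ((x : ℂ) - (lam : ℂ) * ((Real.cos φ : ℂ) / (Real.sin φ : ℂ))) * MP (n + 1) lam φ x) *
        z ^ (n + 2) := by
        rw [show (((lam : ℂ) * (2 * lam + n) / (2 * (Real.sin φ : ℂ) ^ 2)) * MP n lam φ x +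
              ((x : ℂ) - (lam : ℂ) * ((Real.cos φ : ℂ) / (Real.sin φ : ℂ))) *
                MP (n + 1) lam φ x) * z ^ (n + 2)
            = (((lam : ℂ) * (2 * lam + n) / (2 * (Real.sin φ : ℂ) ^ 2)) * z ^ 2) *
                (MP n lam φ x * z ^ n) +
              (((x : ℂ) - (lam : ℂ) * ((Real.cos φ : ℂ) / (Real.sin φ : ℂ))) * z) *
                (MP (n + 1) lam φ x * z ^ (n + 1)) by ring,
          hR1, hco, HA, HA1, hfz, pow_succ Complex.I n]
        linear_combination Complex.I ^ n * (b * z + 2 * (lam : ℂ) * (1 - z)) *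
          Asum b (2 * (lam : ℂ)) z (n + 1) * Complex.I_sq
end
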